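/- Let η² > 0 and let η*² ≥ η² be reals. Then ∫₀^∞ 4r·η²·log(r² + η*²)/(r² + η²)² dr ≤ 2·log(η*²) + 2. -/

import Mathlib

/-!
With `w(r) = 4 r η² / (r² + η²)²`, the integrand is `w(r) log(r² + η*²)`. Since `η*² ≥ η²`,
`(r² + η*²) / η*² ≤ (r² + η²) / η²`, so `log(r² + η*²) ≤ log η*² + log((r² + η²) / η²)`.
Both `w` and `w · log((r² + η²) / η²)` have explicit primitives vanishing at infinity, namely
`-2η² / (r² + η²)` and `-2η² (log((r² + η²) / η²) + 1) / (r² + η²)`, and each integrates to `2`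
over `(0, ∞)`.
-/

open MeasureTheory Set Filter Real Topology

noncomputable def radialWeight (a r : ℝ) : ℝ := 4 * r * a / (r ^ 2 + a) ^ 2

section

variable {a : ℝ}

lemma radialWeight_nonneg (ha : 0 ≤ a) {r : ℝ} (hr : 0 ≤ r) : 0 ≤ radialWeight a r := by
  unfold radialWeight; positivity

lemma log_sq_add_sub_log_nonneg (ha : 0 < a) (r : ℝ) : 0 ≤ log (r ^ 2 + a) - log a :=
  sub_nonneg.mpr (log_le_log ha (le_add_of_nonneg_left (sq_nonneg r)))

lemma hasDerivAt_sq_add (a r : ℝ) : HasDerivAt (fun r : ℝ => r ^ 2 + a) (2 * r) r := by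
  simpa using (hasDerivAt_pow 2 r).add_const a

lemma hasDerivAt_radialWeight_primitive (ha : 0 < a) (r : ℝ) :
    HasDerivAt (fun r : ℝ => -2 * a / (r ^ 2 + a)) (radialWeight a r) r := by
  have hr : r ^ 2 + a ≠ 0 := by positivity
  refine ((hasDerivAt_const r (-2 * a)).div (hasDerivAt_sq_add a r) hr).congr_deriv ?_
  unfold radialWeight
  field_simp
  ring

lemma hasDerivAt_radialWeight_mul_log_primitive (ha : 0 < a) (r : ℝ) :
    HasDerivAt (fun r : ℝ => -2 * a * (log (r ^ 2 + a) - log a + 1) / (r ^ 2 + a))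
      (radialWeight a r * (log (r ^ 2 + a) - log a)) r := by
  have hr : r ^ 2 + a ≠ 0 := by positivity
  have hlog := (hasDerivAt_sq_add a r).log hr
  refine ((((hlog.sub_const (log a)).add_const 1).const_mul (-2 * a)).div
    (hasDerivAt_sq_add a r) hr).congr_deriv ?_
  unfold radialWeight
  field_simp
  ring

lemma tendsto_sq_add_atTop (a : ℝ) : Tendsto (fun r : ℝ => r ^ 2 + a) atTop atTop :=
  tendsto_atTop_add_const_right atTop a (tendsto_pow_atTop two_ne_zero)

lemma tendsto_radialWeight_primitive_atTop (a : ℝ) :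
    Tendsto (fun r : ℝ => -2 * a / (r ^ 2 + a)) atTop (𝓝 0) :=
  tendsto_const_nhds.div_atTop (tendsto_sq_add_atTop a)

lemma tendsto_log_add_const_div_atTop (c : ℝ) :
    Tendsto (fun x : ℝ => (log x + c) / x) atTop (𝓝 0) := by
  have h := isLittleO_log_id_atTop.tendsto_div_nhds_zero.add
    ((tendsto_const_nhds (x := c)).div_atTop tendsto_id)
  simpa only [id, add_div, add_zero] using h

lemma tendsto_radialWeight_mul_log_primitive_atTop (a : ℝ) :
    Tendsto (fun r : ℝ => -2 * a * (log (r ^ 2 + a) - log a + 1) / (r ^ 2 + a)) atTop (𝓝 0) := by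
  have h := ((tendsto_log_add_const_div_atTop (1 - log a)).comp
    (tendsto_sq_add_atTop a)).const_mul (-2 * a)
  rw [mul_zero] at h
  refine h.congr fun r => ?_
  simp only [Function.comp_apply]
  ring

lemma integrableOn_radialWeight (ha : 0 < a) : IntegrableOn (radialWeight a) (Ioi 0) :=
  integrableOn_Ioi_deriv_of_nonneg' (fun r _ => hasDerivAt_radialWeight_primitive ha r)
    (fun _ hr => radialWeight_nonneg ha.le (le_of_lt hr)) (tendsto_radialWeight_primitive_atTop a)

lemma integral_radialWeight (ha : 0 < a) : ∫ r in Ioi 0, radialWeight a r = 2 := by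
  rw [integral_Ioi_of_hasDerivAt_of_nonneg' (fun r _ => hasDerivAt_radialWeight_primitive ha r)
    (fun _ hr => radialWeight_nonneg ha.le (le_of_lt hr)) (tendsto_radialWeight_primitive_atTop a)]
  field_simp
  norm_num

lemma radialWeight_mul_log_nonneg (ha : 0 < a) {r : ℝ} (hr : 0 ≤ r) :
    0 ≤ radialWeight a r * (log (r ^ 2 + a) - log a) :=
  mul_nonneg (radialWeight_nonneg ha.le hr) (log_sq_add_sub_log_nonneg ha r)

lemma integrableOn_radialWeight_mul_log (ha : 0 < a) :
    IntegrableOn (fun r => radialWeight a r * (log (r ^ 2 + a) - log a)) (Ioi 0) :=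
  integrableOn_Ioi_deriv_of_nonneg'
    (fun r _ => hasDerivAt_radialWeight_mul_log_primitive ha r)
    (fun _ hr => radialWeight_mul_log_nonneg ha (le_of_lt hr))
    (tendsto_radialWeight_mul_log_primitive_atTop a)

lemma integral_radialWeight_mul_log (ha : 0 < a) :
    ∫ r in Ioi 0, radialWeight a r * (log (r ^ 2 + a) - log a) = 2 := by
  rw [integral_Ioi_of_hasDerivAt_of_nonneg'
    (fun r _ => hasDerivAt_radialWeight_mul_log_primitive ha r)
    (fun _ hr => radialWeight_mul_log_nonneg ha (le_of_lt hr))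
    (tendsto_radialWeight_mul_log_primitive_atTop a)]
  field_simp
  norm_num

variable {b : ℝ}

lemma log_sq_add_le (ha : 0 < a) (hab : a ≤ b) (r : ℝ) :
    log (r ^ 2 + b) ≤ log b + (log (r ^ 2 + a) - log a) := by
  have hb : 0 < b := ha.trans_le hab
  have hra : 0 < r ^ 2 + a := by positivity
  have hle : r ^ 2 + b ≤ b * (r ^ 2 + a) / a := by
    rw [le_div_iff₀ ha]
    nlinarith [sq_nonneg r]
  calc log (r ^ 2 + b) ≤ log (b * (r ^ 2 + a) / a) := log_le_log (by positivity) hle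
    _ = log b + (log (r ^ 2 + a) - log a) := by
      rw [log_div (by positivity) ha.ne', log_mul hb.ne' hra.ne']
      ring

lemma radialWeight_mul_log_sq_add_le (ha : 0 < a) (hab : a ≤ b) {r : ℝ} (hr : 0 ≤ r) :
    radialWeight a r * log (r ^ 2 + b)
      ≤ log b * radialWeight a r + radialWeight a r * (log (r ^ 2 + a) - log a) := by
  have := mul_le_mul_of_nonneg_left (log_sq_add_le ha hab r) (radialWeight_nonneg ha.le hr)
  linarith

lemma le_radialWeight_mul_log_sq_add (ha : 0 < a) (hab : a ≤ b) {r : ℝ} (hr : 0 ≤ r) :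
    log b * radialWeight a r ≤ radialWeight a r * log (r ^ 2 + b) := by
  rw [mul_comm]
  exact mul_le_mul_of_nonneg_left
    (log_le_log (ha.trans_le hab) (le_add_of_nonneg_left (sq_nonneg r)))
    (radialWeight_nonneg ha.le hr)

lemma integrableOn_radialWeight_mul_log_sq_add (ha : 0 < a) (hab : a ≤ b) :
    IntegrableOn (fun r => radialWeight a r * log (r ^ 2 + b)) (Ioi 0) := by
  have hb : 0 < b := ha.trans_le hab
  have hcont : Continuous fun r => radialWeight a r * log (r ^ 2 + b) := by
    unfold radialWeight
    fun_prop (disch := intros; positivity)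
  refine integrable_of_le_of_le hcont.aestronglyMeasurable
    (ae_restrict_of_forall_mem measurableSet_Ioi
      fun r hr => le_radialWeight_mul_log_sq_add ha hab (le_of_lt hr))
    (ae_restrict_of_forall_mem measurableSet_Ioi
      fun r hr => radialWeight_mul_log_sq_add_le ha hab (le_of_lt hr))
    ((integrableOn_radialWeight ha).const_mul _)
    (((integrableOn_radialWeight ha).const_mul _).add (integrableOn_radialWeight_mul_log ha))

end

theorem stmt_6 (η2 ηs2 : ℝ) (hη2 : 0 < η2) (h : η2 ≤ ηs2) :
    ∫ r in Set.Ioi (0 : ℝ), 4 * r * η2 * Real.log (r ^ 2 + ηs2) / (r ^ 2 + η2) ^ 2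
      ≤ 2 * Real.log ηs2 + 2 := by
  have hintegrand : (fun r => 4 * r * η2 * log (r ^ 2 + ηs2) / (r ^ 2 + η2) ^ 2)
      = fun r => radialWeight η2 r * log (r ^ 2 + ηs2) := by
    ext r
    unfold radialWeight
    ring
  rw [hintegrand]
  have hw := integrableOn_radialWeight hη2
  have hwlog := integrableOn_radialWeight_mul_log hη2
  calc ∫ r in Ioi 0, radialWeight η2 r * log (r ^ 2 + ηs2)
      ≤ ∫ r in Ioi 0, (log ηs2 * radialWeight η2 r
          + radialWeight η2 r * (log (r ^ 2 + η2) - log η2)) :=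
        setIntegral_mono_on (integrableOn_radialWeight_mul_log_sq_add hη2 h)
          ((hw.const_mul _).add hwlog) measurableSet_Ioi
          fun r hr => radialWeight_mul_log_sq_add_le hη2 h (le_of_lt hr)
    _ = 2 * log ηs2 + 2 := by
      rw [integral_add (hw.const_mul _) hwlog, integral_const_mul, integral_radialWeight hη2,
        integral_radialWeight_mul_log hη2]
      ring
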